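/- arXiv:1704.03488 — 3 statements merged into one kernel-verified Lean document; each statement's English description precedes it below -/
import Mathlib

section
/- Let H : ℝ^m → ℝ be convex differentiable, A : ℝ^n → ℝ^m linear, G : ℝ^n → ℝ^n, and γ, τ > 0, θ ∈ ℝ. Suppose (z, y, u, ū) is a fixed point of the PDHG1-type scheme z⁺ = z + γAū − γ prox_{(1/γ)H}((1/γ)z + Aū), y⁺ = y + γū − γG((1/γ)y + ū), u⁺ = u − τA^T z⁺ − τ y⁺, ū⁺ = u⁺ + θ(u⁺ − u). Then ū = u, z = ∇H(Au), y = −A^T∇H(Au), and u = G(u − (1/γ)A^T∇H(Au)). -/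
/-!
At a fixed point every increment of the scheme vanishes. Hence `ū = u`, and the prox output
equals `A u`; the first-order condition of the prox, `γ (b - w) = ∇H w`, then gives
`z = ∇H (A u)`. The `u`-update forces `y = -Aᵀ z`, and the `y`-update says that `u` is the
value of `G` at `(1/γ) y + u = u - (1/γ) Aᵀ ∇H (A u)`.
-/

open ContinuousLinearMap

/-- `proxProp lam F b w` expresses `w = prox_{lam·F}(b)`. -/
def proxProp {k : ℕ} (lam : ℝ) (F : EuclideanSpace ℝ (Fin k) → ℝ)
    (b w : EuclideanSpace ℝ (Fin k)) : Prop :=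
  ∀ v, (1/2) * ‖w - b‖^2 + lam * F w ≤ (1/2) * ‖v - b‖^2 + lam * F v

theorem IsLocalMin.sub_add_smul_eq_zero_of_hasGradientAt {E : Type*} [NormedAddCommGroup E]
    [InnerProductSpace ℝ E] [CompleteSpace E] {F : E → ℝ} {g b p : E} {lam : ℝ}
    (hmin : IsLocalMin (fun v => (1/2) * ‖v - b‖^2 + lam * F v) p) (hF : HasGradientAt F g p) :
    p - b + lam • g = 0 := by
  have hd : HasFDerivAt (fun v => (1/2) * ‖v - b‖^2 + lam * F v)
      (InnerProductSpace.toDual ℝ E (p - b + lam • g)) p := by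
    refine ((((hasFDerivAt_id p).sub_const b).norm_sq.const_mul (1/2 : ℝ)).add
      (hF.hasFDerivAt.const_mul lam)).congr_fderiv ?_
    ext v
    simp
  exact (InnerProductSpace.toDual ℝ E).map_eq_zero_iff.mp (hmin.hasFDerivAt_eq_zero hd)

theorem proxProp.smul_sub_eq_of_hasGradientAt {k : ℕ} {F : EuclideanSpace ℝ (Fin k) → ℝ}
    {g b w : EuclideanSpace ℝ (Fin k)} {γ : ℝ} (hw : proxProp (1/γ) F b w) (hγ : γ ≠ 0)
    (hF : HasGradientAt F g w) :
    γ • (b - w) = g := by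
  have hopt := IsLocalMin.sub_add_smul_eq_zero_of_hasGradientAt
    (Filter.Eventually.of_forall hw) hF
  rw [← neg_sub, neg_add_eq_zero] at hopt
  rw [hopt, smul_smul, mul_one_div_cancel hγ, one_smul]

theorem eq_of_self_eq_add_smul_sub_smul {K M : Type*} [DivisionRing K] [AddCommGroup M]
    [Module K M] {c : K} {x a b : M} (hc : c ≠ 0) (h : x = x + c • a - c • b) : a = b := by
  rwa [add_sub_assoc, left_eq_add, ← smul_sub, smul_eq_zero_iff_right hc, sub_eq_zero] at h

theorem pdhg1_fixed_point_general {n m : ℕ}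
    (H : EuclideanSpace ℝ (Fin m) → ℝ)
    (H' : EuclideanSpace ℝ (Fin m) → EuclideanSpace ℝ (Fin m))
    (hH : ∀ x, HasGradientAt H (H' x) x)
    (A : EuclideanSpace ℝ (Fin n) →L[ℝ] EuclideanSpace ℝ (Fin m))
    (G : EuclideanSpace ℝ (Fin n) → EuclideanSpace ℝ (Fin n))
    (γ τ θ : ℝ) (hγ : 0 < γ) (hτ : 0 < τ)
    (z p : EuclideanSpace ℝ (Fin m)) (y u ubar : EuclideanSpace ℝ (Fin n))
    -- `p` is the prox step in the `z`-update
    (hp : proxProp (1/γ) H ((1/γ) • z + A ubar) p)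
    -- fixed-point equations of the PDHG1-type scheme
    (hz : z = z + γ • (A ubar) - γ • p)
    (hy : y = y + γ • ubar - γ • G ((1/γ) • y + ubar))
    (hu : u = u - τ • (adjoint A) z - τ • y)
    (hub : ubar = u + θ • (u - u)) :
    ubar = u ∧ z = H' (A u) ∧ y = -(adjoint A) (H' (A u)) ∧
      u = G (u - (1/γ) • (adjoint A) (H' (A u))) := by
  obtain rfl : ubar = u := by simpa using hub
  have hAu : A ubar = p := eq_of_self_eq_add_smul_sub_smul hγ.ne' hz
  have hzH : z = H' (A ubar) := by
    have := hp.smul_sub_eq_of_hasGradientAt hγ.ne' (hH p)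
    rwa [← hAu, add_sub_cancel_right, smul_smul, mul_one_div_cancel hγ.ne', one_smul] at this
  have hyz : y = -(adjoint A) z := by
    rwa [sub_sub, ← smul_add, eq_comm, sub_eq_self, smul_eq_zero_iff_right hτ.ne',
      add_eq_zero_iff_eq_neg'] at hu
  have hG : ubar = G ((1/γ) • y + ubar) := eq_of_self_eq_add_smul_sub_smul hγ.ne' hy
  rw [hyz, hzH] at hG
  refine ⟨rfl, hzH, hzH ▸ hyz, ?_⟩
  rwa [smul_neg, neg_add_eq_sub] at hG

theorem pdhg1_fixed_point {n m : ℕ}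
    (H : EuclideanSpace ℝ (Fin m) → ℝ)
    (H' : EuclideanSpace ℝ (Fin m) → EuclideanSpace ℝ (Fin m))
    (hHconv : ConvexOn ℝ Set.univ H)
    (hH : ∀ x, HasGradientAt H (H' x) x)
    (A : EuclideanSpace ℝ (Fin n) →L[ℝ] EuclideanSpace ℝ (Fin m))
    (G : EuclideanSpace ℝ (Fin n) → EuclideanSpace ℝ (Fin n))
    (γ τ θ : ℝ) (hγ : 0 < γ) (hτ : 0 < τ)
    (z p : EuclideanSpace ℝ (Fin m)) (y u ubar : EuclideanSpace ℝ (Fin n))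
    -- `p` is the prox step in the `z`-update
    (hp : proxProp (1/γ) H ((1/γ) • z + A ubar) p)
    -- fixed-point equations of the PDHG1-type scheme
    (hz : z = z + γ • (A ubar) - γ • p)
    (hy : y = y + γ • ubar - γ • G ((1/γ) • y + ubar))
    (hu : u = u - τ • (adjoint A) z - τ • y)
    (hub : ubar = u + θ • (u - u)) :
    ubar = u ∧ z = H' (A u) ∧ y = -(adjoint A) (H' (A u)) ∧
      u = G (u - (1/γ) • (adjoint A) (H' (A u))) :=
  pdhg1_fixed_point_general H H' hH A G γ τ θ hγ hτ z p y u ubar hp hz hy hu hub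
end

section
/- Let H : ℝ^n → ℝ be convex differentiable, G : ℝ^n → ℝ^n, γ, τ > 0, θ ∈ ℝ. Suppose (y, u, ū) is a fixed point of the PDHG2-type scheme y⁺ = y + γū − γG((1/γ)y + ū), u⁺ = prox_{τH}(u − τy⁺), ū⁺ = u⁺ + θ(u⁺ − u). Then ū = u, y = −∇H(u), and u = G(u − (1/γ)∇H(u)). -/
open InnerProductSpace

section Gradient

variable {F : Type*} [NormedAddCommGroup F] [InnerProductSpace ℝ F] [CompleteSpace F]
  {f g : F → ℝ} {f' g' x : F}

theorem HasGradientAt.add (hf : HasGradientAt f f' x) (hg : HasGradientAt g g' x) :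
    HasGradientAt (fun v => f v + g v) (f' + g') x := by
  rw [hasGradientAt_iff_hasFDerivAt, map_add]
  exact hf.hasFDerivAt.add hg.hasFDerivAt

theorem HasGradientAt.const_mul (c : ℝ) (hf : HasGradientAt f f' x) :
    HasGradientAt (fun v => c * f v) (c • f') x := by
  rw [hasGradientAt_iff_hasFDerivAt, map_smulₛₗ]
  exact hf.hasFDerivAt.const_mul c

theorem hasGradientAt_half_norm_sub_sq (b x : F) :
    HasGradientAt (fun v => (1 / 2 : ℝ) * ‖v - b‖ ^ 2) (x - b) x := by
  rw [hasGradientAt_iff_hasFDerivAt]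
  refine ((((hasFDerivAt_id x).sub_const b).norm_sq).const_mul (1 / 2 : ℝ)).congr_fderiv ?_
  ext v
  simp

theorem IsLocalMin.hasGradientAt_eq_zero (h : IsLocalMin f x) (hf : HasGradientAt f f' x) :
    f' = 0 :=
  (toDual ℝ F).injective (by rw [map_zero]; exact h.hasFDerivAt_eq_zero hf.hasFDerivAt)

end Gradient

theorem proxProp.sub_eq_smul_of_hasGradientAt {k : ℕ} {lam : ℝ}
    {F : EuclideanSpace ℝ (Fin k) → ℝ} {b w F' : EuclideanSpace ℝ (Fin k)}
    (hw : proxProp lam F b w) (hF : HasGradientAt F F' w) : b - w = lam • F' := by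
  have hmin : IsLocalMin (fun v => (1 / 2 : ℝ) * ‖v - b‖ ^ 2 + lam * F v) w :=
    Filter.Eventually.of_forall hw
  have hzero : w - b + lam • F' = 0 :=
    hmin.hasGradientAt_eq_zero ((hasGradientAt_half_norm_sub_sq b w).add (hF.const_mul lam))
  linear_combination (norm := module) -hzero

theorem pdhg2_fixed_point_general {n : ℕ}
    (H : EuclideanSpace ℝ (Fin n) → ℝ)
    (H' : EuclideanSpace ℝ (Fin n) → EuclideanSpace ℝ (Fin n))
    (hH : ∀ x, HasGradientAt H (H' x) x)
    (G : EuclideanSpace ℝ (Fin n) → EuclideanSpace ℝ (Fin n))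
    (γ τ θ : ℝ) (hγ : 0 < γ) (hτ : 0 < τ)
    (y u ubar : EuclideanSpace ℝ (Fin n))
    -- fixed-point equations of the PDHG2-type scheme (the new `y` equals `y`)
    (hy : y = y + γ • ubar - γ • G ((1/γ) • y + ubar))
    (hu : proxProp τ H (u - τ • y) u)
    (hub : ubar = u + θ • (u - u)) :
    ubar = u ∧ y = -H' u ∧ u = G (u - (1/γ) • H' u) := by
  have hubar : ubar = u := by simpa using hub
  have hyH : y = -H' u := by
    have hopt := hu.sub_eq_smul_of_hasGradientAt (hH u)
    have hneg : -y = H' u :=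
      smul_right_injective _ hτ.ne' (by linear_combination (norm := module) hopt)
    rw [← hneg, neg_neg]
  have hG : ubar = G ((1 / γ) • y + ubar) :=
    smul_right_injective _ hγ.ne' (by linear_combination (norm := module) -hy)
  refine ⟨hubar, hyH, ?_⟩
  rw [hubar, hyH] at hG
  rwa [smul_neg, neg_add_eq_sub] at hG

theorem pdhg2_fixed_point {n : ℕ}
    (H : EuclideanSpace ℝ (Fin n) → ℝ)
    (H' : EuclideanSpace ℝ (Fin n) → EuclideanSpace ℝ (Fin n))
    (hHconv : ConvexOn ℝ Set.univ H)
    (hH : ∀ x, HasGradientAt H (H' x) x)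
    (G : EuclideanSpace ℝ (Fin n) → EuclideanSpace ℝ (Fin n))
    (γ τ θ : ℝ) (hγ : 0 < γ) (hτ : 0 < τ)
    (y u ubar : EuclideanSpace ℝ (Fin n))
    -- fixed-point equations of the PDHG2-type scheme (the new `y` equals `y`)
    (hy : y = y + γ • ubar - γ • G ((1/γ) • y + ubar))
    (hu : proxProp τ H (u - τ • y) u)
    (hub : ubar = u + θ • (u - u)) :
    ubar = u ∧ y = -H' u ∧ u = G (u - (1/γ) • H' u) :=
  pdhg2_fixed_point_general H H' hH G γ τ θ hγ hτ y u ubar hy hu hub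
end

section
/- Let G : ℝ^n → ℝ^n and H : ℝ^n → ℝ convex differentiable, and consider the PDHG2-type scheme with θ = 1, τ = 1/γ: y⁺ = y + γū − γG((1/γ)y + ū), u⁺ = prox_{(1/γ)H}(u − (1/γ)y⁺), ū⁺ = 2u⁺ − u. Then (y, u, ū) is a fixed point of this scheme if and only if (u, u, −γ·((1/γ)y)) suitably initialized gives a fixed point of the ADMM-type scheme with the same γ; in particular, the u-components of fixed points of the two schemes coincide and are exactly the solutions of u = G(u − (1/γ)∇H(u)). -/
/-!
At a fixed point of either scheme the extrapolated iterate `ū` equals `u` and the multiplier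
update vanishes, which for `γ ≠ 0` forces `u = G(u + y/γ)` (PDHG2) and `v = u` (ADMM).
Since `H` is convex and differentiable, `u = prox_{H/γ}(u - y/γ)` holds exactly when the
optimality condition `u - y/γ = u + ∇H(u)/γ` does, i.e. `y = -∇H(u)`. Substituting this
multiplier, both fixed-point conditions become `u = G(u - ∇H(u)/γ)`.
-/

open Set

section FirstOrder

variable {E : Type*} [NormedAddCommGroup E] [InnerProductSpace ℝ E]

theorem convexOn_univ_half_norm_sub_sq_add_mul {F : E → ℝ} (hF : ConvexOn ℝ univ F) (b : E)
    {lam : ℝ} (hlam : 0 ≤ lam) :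
    ConvexOn ℝ univ (fun v => (1/2) * ‖v - b‖^2 + lam * F v) := by
  have hsq : ConvexOn ℝ univ (fun v : E => ‖v‖ ^ 2) :=
    convexOn_univ_norm.pow (fun _ _ => norm_nonneg _) 2
  refine (((hsq.translate_right (-b)).smul (by norm_num : (0:ℝ) ≤ 1/2)).add
    (hF.smul hlam)).congr ?_
  intro v _
  simp [sub_eq_neg_add]

variable [CompleteSpace E]

theorem ConvexOn.add_inner_le_of_hasGradientAt {s : Set E} {f : E → ℝ} {g x y : E}
    (hf : ConvexOn ℝ s f) (hx : x ∈ s) (hy : y ∈ s) (hg : HasGradientAt f g x) :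
    f x + inner ℝ g (y - x) ≤ f y := by
  let φ : ℝ → ℝ := f ∘ AffineMap.lineMap x y
  have hφ : ConvexOn ℝ (AffineMap.lineMap x y ⁻¹' s) φ := hf.comp_affineMap _
  have hφ' : HasDerivAt φ (inner ℝ g (y - x)) 0 := by
    simpa using (hasGradientAt_iff_hasFDerivAt.mp hg).comp_hasDerivAt_of_eq 0
      (AffineMap.hasDerivAt_lineMap (a := x) (b := y)) (by simp)
  have hslope := hφ.le_slope_of_hasDerivAt (x := 0) (y := 1) (by simpa using hx)
    (by simpa using hy) zero_lt_one hφ'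
  simp only [φ, slope_def_field, Function.comp_apply, AffineMap.lineMap_apply_one,
    AffineMap.lineMap_apply_zero, sub_zero, div_one] at hslope
  linarith

theorem ConvexOn.isMinOn_univ_iff_hasGradientAt_eq_zero {f : E → ℝ} {g x : E}
    (hf : ConvexOn ℝ univ f) (hg : HasGradientAt f g x) : IsMinOn f univ x ↔ g = 0 := by
  refine ⟨fun hmin => ?_, fun hg0 y _ => ?_⟩
  · simpa using (hmin.isLocalMin Filter.univ_mem).hasFDerivAt_eq_zero
      (hasGradientAt_iff_hasFDerivAt.mp hg)
  · simpa [hg0] using hf.add_inner_le_of_hasGradientAt (mem_univ x) (mem_univ y) hg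

theorem HasGradientAt.half_norm_sub_sq_add_mul {F : E → ℝ} {g w : E} (b : E) (lam : ℝ)
    (hF : HasGradientAt F g w) :
    HasGradientAt (fun v => (1/2) * ‖v - b‖^2 + lam * F v) (w - b + lam • g) w := by
  rw [hasGradientAt_iff_hasFDerivAt] at hF ⊢
  refine ((((hasFDerivAt_id w).sub_const b).norm_sq.const_mul (1/2)).add
    (hF.const_mul lam)).congr_fderiv ?_
  ext v
  simp

end FirstOrder

section Prox

variable {k : ℕ} {F : EuclideanSpace ℝ (Fin k) → ℝ} {g w : EuclideanSpace ℝ (Fin k)}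

theorem proxProp_iff_eq_add_smul (hF : ConvexOn ℝ univ F) (hg : HasGradientAt F g w)
    {lam : ℝ} (hlam : 0 ≤ lam) (b : EuclideanSpace ℝ (Fin k)) :
    proxProp lam F b w ↔ b = w + lam • g := by
  calc proxProp lam F b w
      ↔ IsMinOn (fun v => (1/2) * ‖v - b‖^2 + lam * F v) univ w := by
        rw [isMinOn_univ_iff, proxProp]
    _ ↔ w - b + lam • g = 0 :=
      (convexOn_univ_half_norm_sub_sq_add_mul hF b hlam).isMinOn_univ_iff_hasGradientAt_eq_zero
        (hg.half_norm_sub_sq_add_mul b lam)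
    _ ↔ b = w + lam • g := by rw [sub_add_eq_add_sub, sub_eq_zero, eq_comm]

theorem proxProp_one_div_iff (hF : ConvexOn ℝ univ F) (hg : HasGradientAt F g w)
    {γ : ℝ} (hγ : 0 < γ) (y : EuclideanSpace ℝ (Fin k)) :
    proxProp (1/γ) F (w - (1/γ) • y) w ↔ y = -g := by
  rw [proxProp_iff_eq_add_smul hF hg (by positivity), sub_eq_add_neg, add_right_inj,
    ← smul_neg, smul_right_inj (by positivity), neg_eq_iff_eq_neg]

end Prox

theorem self_eq_add_smul_sub_iff {K M : Type*} [DivisionRing K] [AddCommGroup M] [Module K M]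
    {γ : K} (hγ : γ ≠ 0) (y a b : M) : y = y + γ • (a - b) ↔ a = b := by
  rw [left_eq_add, smul_eq_zero, sub_eq_zero, or_iff_right hγ]

section FixedPoints

variable {n : ℕ} {G : EuclideanSpace ℝ (Fin n) → EuclideanSpace ℝ (Fin n)}
  {H : EuclideanSpace ℝ (Fin n) → ℝ} {g u : EuclideanSpace ℝ (Fin n)} {γ : ℝ}

theorem exists_pdhg2_fixed_point_iff (hH : ConvexOn ℝ univ H) (hg : HasGradientAt H g u)
    (hγ : 0 < γ) :
    (∃ y ubar, y = y + γ • ubar - γ • G ((1/γ) • y + ubar) ∧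
        proxProp (1/γ) H (u - (1/γ) • y) u ∧ ubar = u + (1 : ℝ) • (u - u)) ↔
      u = G (u - (1/γ) • g) := by
  have hstep (y : EuclideanSpace ℝ (Fin n)) :
      y = y + γ • u - γ • G ((1/γ) • y + u) ↔ u = G ((1/γ) • y + u) := by
    rw [add_sub_assoc, ← smul_sub, self_eq_add_smul_sub_iff hγ.ne']
  have hubar : u + (1 : ℝ) • (u - u) = u := by simp
  constructor
  · rintro ⟨y, ubar, hfix, hprox, rfl⟩
    obtain rfl := (proxProp_one_div_iff hH hg hγ y).1 hprox
    rw [hubar, hstep] at hfix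
    simpa [sub_eq_neg_add] using hfix
  · intro hu
    refine ⟨-g, u, ?_, (proxProp_one_div_iff hH hg hγ _).2 rfl, hubar.symm⟩
    rw [hstep]
    simpa [sub_eq_neg_add] using hu

theorem exists_admm_fixed_point_iff (hH : ConvexOn ℝ univ H) (hg : HasGradientAt H g u)
    (hγ : 0 < γ) :
    (∃ v y, proxProp (1/γ) H (v - (1/γ) • y) u ∧ v = G (u + (1/γ) • y) ∧
        y = y + γ • (u - v)) ↔
      u = G (u - (1/γ) • g) := by
  constructor
  · rintro ⟨v, y, hprox, hv, hfix⟩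
    obtain rfl := (self_eq_add_smul_sub_iff hγ.ne' y u v).1 hfix
    obtain rfl := (proxProp_one_div_iff hH hg hγ y).1 hprox
    simpa [sub_eq_add_neg] using hv
  · intro hu
    refine ⟨u, -g, (proxProp_one_div_iff hH hg hγ _).2 rfl, ?_, by simp⟩
    simpa [sub_eq_add_neg] using hu

end FixedPoints

/-- PDHG2 with `θ = 1`, `τ = 1/γ` versus ADMM: the `u`-components of fixed points of the
two schemes coincide, and both equal the solution set of `u = G(u − (1/γ)∇H(u))`. -/
theorem pdhg2_admm_fixed_point_relation {n : ℕ}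
    (G : EuclideanSpace ℝ (Fin n) → EuclideanSpace ℝ (Fin n))
    (H : EuclideanSpace ℝ (Fin n) → ℝ)
    (H' : EuclideanSpace ℝ (Fin n) → EuclideanSpace ℝ (Fin n))
    (hHconv : ConvexOn ℝ Set.univ H)
    (hH : ∀ x, HasGradientAt H (H' x) x)
    (γ : ℝ) (hγ : 0 < γ) :
    ({u : EuclideanSpace ℝ (Fin n) | ∃ y ubar,
        y = y + γ • ubar - γ • G ((1/γ) • y + ubar) ∧
        proxProp (1/γ) H (u - (1/γ) • y) u ∧
        ubar = u + (1 : ℝ) • (u - u)} =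
      {u : EuclideanSpace ℝ (Fin n) | ∃ v y,
        proxProp (1/γ) H (v - (1/γ) • y) u ∧
        v = G (u + (1/γ) • y) ∧
        y = y + γ • (u - v)}) ∧
    ({u : EuclideanSpace ℝ (Fin n) | ∃ y ubar,
        y = y + γ • ubar - γ • G ((1/γ) • y + ubar) ∧
        proxProp (1/γ) H (u - (1/γ) • y) u ∧
        ubar = u + (1 : ℝ) • (u - u)} =
      {u : EuclideanSpace ℝ (Fin n) | u = G (u - (1/γ) • H' u)}) := by
  have hpdhg2 (u) := exists_pdhg2_fixed_point_iff (G := G) hHconv (hH u) hγ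
  have hadmm (u) := exists_admm_fixed_point_iff (G := G) hHconv (hH u) hγ
  exact ⟨Set.ext fun u => (hpdhg2 u).trans (hadmm u).symm, Set.ext hpdhg2⟩
end
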